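/- arXiv:1911.12557 — 6 statements merged into one kernel-verified Lean document; each statement's English description precedes it below -/
import Mathlib

section
/- Let d, m ≥ 1. Let N : Fin m → Matrix (Fin d) (Fin d) ℂ be a trace-preserving Kraus family (i.e. Σ_i N_iᴴ N_i = I), and let M₀, M₁ be d×d complex matrices forming a binary quantum measurement (i.e. M₀ᴴM₀ + M₁ᴴM₁ = I). Define the map ℰ on d×d complex matrices by ℰ(ρ) = Σ_i N_i (M₁ ρ M₁ᴴ) N_iᴴ. Then for every positive semidefinite d×d complex matrix ρ, the series of nonnegative real numbers Σ_{k=0}^∞ tr(ℰ^k(ρ)) converges (i.e. the family k ↦ tr(ℰ^k(ρ)) is summable) if and only if Σ_{k=0}^∞ tr(M₀ ℰ^k(ρ) M₀ᴴ) = tr(ρ). -/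
/-!
Write `aₖ = tr ℰᵏρ` and `bₖ = tr (M₀ ℰᵏρ M₀ᴴ)`. Since the body and the measurement preserve
trace, `aₖ₊₁ + bₖ = aₖ`, so `Σ bₖ = a₀ - lim aₖ`: the loop terminates almost surely iff
`aₖ → 0`. Summability of `aₖ` forces `aₖ → 0`. Conversely, the trace of a positive semidefinite
matrix bounds all its entries, so `aₖ → 0` gives `ℰᵏρ → 0`. Then `ℰᵏ → 0` pointwise on the
finite-dimensional `ℰ`-invariant span of the orbit of `ρ`, hence in operator norm there; some
power of `ℰ` is a strict contraction on that span, and the orbit decays geometrically.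
-/

open Matrix
open scoped ComplexOrder

/-- The super-operator `ℰ(ρ) = Σ_i N_i (M₁ ρ M₁ᴴ) N_iᴴ` of one loop iteration. -/
noncomputable def loopStep {d m : ℕ} (N : Fin m → Matrix (Fin d) (Fin d) ℂ)
    (M₁ : Matrix (Fin d) (Fin d) ℂ) (σ : Matrix (Fin d) (Fin d) ℂ) :
    Matrix (Fin d) (Fin d) ℂ :=
  ∑ i, N i * (M₁ * σ * M₁ᴴ) * (N i)ᴴ

open Filter Topology

theorem tsum_eq_iff_tendsto_zero_of_add_eq {a b : ℕ → ℝ} (ha : ∀ k, 0 ≤ a k)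
    (hb : ∀ k, 0 ≤ b k) (hab : ∀ k, a (k + 1) + b k = a k) :
    ∑' k, b k = a 0 ↔ Tendsto a atTop (𝓝 0) := by
  have hpartial : ∀ n, ∑ k ∈ Finset.range n, b k = a 0 - a n := fun n => by
    rw [← Finset.sum_range_sub' a n]
    exact Finset.sum_congr rfl fun k _ => by linarith [hab k]
  have hsum : Summable b := summable_of_sum_range_le hb fun n => by linarith [hpartial n, ha n]
  rw [← hsum.hasSum_iff, hasSum_iff_tendsto_nat_of_nonneg hb]
  simp_rw [hpartial]
  constructor <;> intro h <;> simpa using h.const_sub (a 0)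

theorem norm_pow_mul_add_le {R : Type*} [SeminormedRing R] (a : R) (K r q : ℕ) :
    ‖a ^ (q * K + r)‖ ≤ ‖a ^ K‖ ^ q * ‖a ^ r‖ := by
  induction q with
  | zero => simp
  | succ q ih =>
    calc ‖a ^ ((q + 1) * K + r)‖ = ‖a ^ K * a ^ (q * K + r)‖ := by
          rw [← pow_add]; ring_nf
      _ ≤ ‖a ^ K‖ * (‖a ^ K‖ ^ q * ‖a ^ r‖) := by
          grw [norm_mul_le, ih]
      _ = ‖a ^ K‖ ^ (q + 1) * ‖a ^ r‖ := by ring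

theorem summable_norm_pow_of_norm_pow_lt_one {R : Type*} [SeminormedRing R] {a : R} {K : ℕ}
    (hK : K ≠ 0) (ha : ‖a ^ K‖ < 1) : Summable fun n => ‖a ^ n‖ := by
  have : NeZero K := ⟨hK⟩
  have hblocks : Summable fun p : ℕ × Fin K => ‖a ^ K‖ ^ p.1 * ‖a ^ (p.2 : ℕ)‖ :=
    Summable.mul_of_nonneg (f := fun q => ‖a ^ K‖ ^ q) (g := fun r : Fin K => ‖a ^ (r : ℕ)‖)
      (summable_geometric_of_lt_one (norm_nonneg _) ha) .of_finite
      (fun _ => by positivity) (fun _ => norm_nonneg _)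
  refine .of_nonneg_of_le (fun _ => norm_nonneg _) (fun n => ?_)
    ((Nat.divModEquiv K).summable_iff.mpr hblocks)
  simpa [Nat.div_add_mod'] using norm_pow_mul_add_le a K (n % K) (n / K)

theorem summable_norm_pow_of_tendsto_pow_nhds_zero {R : Type*} [SeminormedRing R] {a : R}
    (h : Tendsto (fun n => a ^ n) atTop (𝓝 0)) : Summable fun n => ‖a ^ n‖ := by
  obtain ⟨K, hlt, hK⟩ := ((tendsto_zero_iff_norm_tendsto_zero.mp h).eventually_lt_const
    one_pos |>.and (eventually_ne_atTop 0)).exists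
  exact summable_norm_pow_of_norm_pow_lt_one hK hlt

theorem tendsto_pow_apply_of_mem_span_orbit {R M : Type*} [Semiring R] [AddCommMonoid M]
    [Module R M] [TopologicalSpace M] [ContinuousAdd M] [ContinuousConstSMul R M]
    {L : M →ₗ[R] M} {x : M} (h : Tendsto (fun n => (L ^ n) x) atTop (𝓝 0)) {y : M}
    (hy : y ∈ Submodule.span R (Set.range fun k => (L ^ k) x)) :
    Tendsto (fun n => (L ^ n) y) atTop (𝓝 0) := by
  induction hy using Submodule.span_induction with
  | mem _ hz =>
    obtain ⟨k, rfl⟩ := hz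
    simpa [Function.comp_def, ← Module.End.mul_apply, ← pow_add]
      using h.comp (tendsto_add_atTop_nat k)
  | zero => simpa using tendsto_const_nhds
  | add _ _ _ _ h₁ h₂ => simpa using h₁.add h₂
  | smul c _ _ h₁ => simpa using h₁.const_smul c

section FiniteDimensional

variable {𝕜 E F : Type*} [NontriviallyNormedField 𝕜] [CompleteSpace 𝕜]
  [NormedAddCommGroup E] [NormedSpace 𝕜 E] [FiniteDimensional 𝕜 E]
  [NormedAddCommGroup F] [NormedSpace 𝕜 F]

theorem ContinuousLinearMap.tendsto_nhds_zero_of_tendsto_apply {ι : Type*} {l : Filter ι}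
    {u : ι → E →L[𝕜] F} (h : ∀ x, Tendsto (fun i => u i x) l (𝓝 0)) :
    Tendsto u l (𝓝 0) := by
  set b := Module.finBasis 𝕜 E
  obtain ⟨C, -, hC⟩ := b.exists_opNorm_le (F := F)
  have hbound : Tendsto (fun i => C * ∑ j, ‖u i (b j)‖) l (𝓝 0) := by
    simpa using (tendsto_finsetSum _ fun j _ => (h (b j)).norm).const_mul C
  refine squeeze_zero_norm (fun i => hC (Finset.sum_nonneg fun _ _ => norm_nonneg _)
    fun j => ?_) hbound
  exact Finset.single_le_sum (f := fun j => ‖u i (b j)‖) (fun _ _ => norm_nonneg _)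
    (Finset.mem_univ j)

theorem summable_norm_pow_apply_of_tendsto_zero {L : E →ₗ[𝕜] E} {x : E}
    (h : Tendsto (fun n => (L ^ n) x) atTop (𝓝 0)) : Summable fun n => ‖(L ^ n) x‖ := by
  set W := Submodule.span 𝕜 (Set.range fun k => (L ^ k) x)
  have hW : W ≤ W.comap L := Submodule.span_le.mpr <| by
    rintro _ ⟨k, rfl⟩
    exact Submodule.subset_span ⟨k + 1, by simp [pow_succ', Module.End.mul_apply]⟩
  let T : W →L[𝕜] W := LinearMap.toContinuousLinearMap (L.restrict hW)
  have hT : ∀ n (w : W), ((T ^ n) w : E) = (L ^ n) w := fun n w => by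
    rw [← ContinuousLinearMap.coe_coe, ContinuousLinearMap.toLinearMap_pow]
    exact congrArg Subtype.val (LinearMap.congr_fun (Module.End.pow_restrict n hW) w)
  have hTn : Tendsto (fun n => T ^ n) atTop (𝓝 0) :=
    ContinuousLinearMap.tendsto_nhds_zero_of_tendsto_apply fun w => by
      rw [tendsto_subtype_rng]
      simpa only [hT, ZeroMemClass.coe_zero] using tendsto_pow_apply_of_mem_span_orbit h w.2
  have hx : x ∈ W := Submodule.subset_span ⟨0, by simp⟩
  refine .of_nonneg_of_le (fun _ => norm_nonneg _) (fun n => ?_)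
    ((summable_norm_pow_of_tendsto_pow_nhds_zero hTn).mul_right ‖(⟨x, hx⟩ : W)‖)
  rw [← hT n ⟨x, hx⟩, ← Submodule.coe_norm]
  exact (T ^ n).le_opNorm _

end FiniteDimensional

section PosSemidef

variable {n 𝕜 : Type*} [RCLike 𝕜] {A : Matrix n n 𝕜}

theorem Matrix.PosSemidef.norm_apply_sq_le (hA : A.PosSemidef) (i j : n) :
    ‖A i j‖ ^ 2 ≤ RCLike.re (A i i) * RCLike.re (A j j) := by
  classical
  have hdet := (hA.submatrix ![i, j]).det_nonneg
  rw [det_fin_two] at hdet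
  simp only [submatrix_apply, Matrix.cons_val_zero, Matrix.cons_val_one] at hdet
  rw [← hA.1.apply j i, RCLike.star_def, RCLike.mul_conj, ← hA.1.coe_re_apply_self i,
    ← hA.1.coe_re_apply_self j] at hdet
  have : (0 : 𝕜) ≤ ((RCLike.re (A i i) * RCLike.re (A j j) - ‖A i j‖ ^ 2 : ℝ) : 𝕜) := by
    push_cast; exact hdet
  exact sub_nonneg.mp (RCLike.ofReal_nonneg.mp this)

variable [Fintype n]

theorem Matrix.PosSemidef.re_apply_self_le_re_trace (hA : A.PosSemidef) (i : n) :
    RCLike.re (A i i) ≤ RCLike.re A.trace := by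
  rw [trace, map_sum]
  exact Finset.single_le_sum (f := fun j => RCLike.re (A.diag j))
    (fun j _ => (RCLike.nonneg_iff.mp hA.diag_nonneg).1) (Finset.mem_univ i)

theorem Matrix.PosSemidef.norm_apply_le_re_trace (hA : A.PosSemidef) (i j : n) :
    ‖A i j‖ ≤ RCLike.re A.trace := by
  have hi := hA.re_apply_self_le_re_trace i
  have hj := hA.re_apply_self_le_re_trace j
  have hi0 := (RCLike.nonneg_iff.mp (hA.diag_nonneg (i := i))).1
  have hj0 := (RCLike.nonneg_iff.mp (hA.diag_nonneg (i := j))).1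
  refine abs_le_of_sq_le_sq' ?_ (hi0.trans hi) |>.2
  nlinarith [hA.norm_apply_sq_le i j]

theorem Matrix.tendsto_zero_of_posSemidef_of_tendsto_re_trace {ι : Type*} {l : Filter ι}
    {A : ι → Matrix n n 𝕜} (hA : ∀ k, (A k).PosSemidef)
    (h : Tendsto (fun k => RCLike.re (A k).trace) l (𝓝 0)) : Tendsto A l (𝓝 0) :=
  tendsto_pi_nhds.2 fun i => tendsto_pi_nhds.2 fun j =>
    squeeze_zero_norm (fun k => (hA k).norm_apply_le_re_trace i j) h

attribute [local instance] Matrix.normedAddCommGroup Matrix.normedSpace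

theorem summable_re_trace_pow_apply_of_tendsto_zero {L : Matrix n n 𝕜 →ₗ[𝕜] Matrix n n 𝕜}
    {ρ : Matrix n n 𝕜} (hL : ∀ k, ((L ^ k) ρ).PosSemidef)
    (h : Tendsto (fun k => RCLike.re ((L ^ k) ρ).trace) atTop (𝓝 0)) :
    Summable fun k => RCLike.re ((L ^ k) ρ).trace := by
  have hsum := (summable_norm_pow_apply_of_tendsto_zero
    (tendsto_zero_of_posSemidef_of_tendsto_re_trace hL h)).of_norm
  exact RCLike.reCLM.summable (hsum.map (traceAddMonoidHom n 𝕜) continuous_id.matrix_trace)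

end PosSemidef

section Loop

variable {d m : ℕ} (N : Fin m → Matrix (Fin d) (Fin d) ℂ) (M₁ : Matrix (Fin d) (Fin d) ℂ)

noncomputable def loopStepLinearMap :
    Matrix (Fin d) (Fin d) ℂ →ₗ[ℂ] Matrix (Fin d) (Fin d) ℂ where
  toFun := loopStep N M₁
  map_add' A B := by
    simp only [loopStep, Matrix.mul_add, Matrix.add_mul, Finset.sum_add_distrib]
  map_smul' c A := by
    simp only [loopStep, Matrix.mul_smul, Matrix.smul_mul, Finset.smul_sum, RingHom.id_apply]

theorem posSemidef_loopStep {σ : Matrix (Fin d) (Fin d) ℂ} (hσ : σ.PosSemidef) :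
    (loopStep N M₁ σ).PosSemidef :=
  posSemidef_sum _ fun i _ => (hσ.mul_mul_conjTranspose_same M₁).mul_mul_conjTranspose_same (N i)

theorem trace_loopStep (hN : ∑ i, (N i)ᴴ * N i = 1) (σ : Matrix (Fin d) (Fin d) ℂ) :
    (loopStep N M₁ σ).trace = (M₁ * σ * M₁ᴴ).trace := by
  simp_rw [loopStep, trace_sum, trace_mul_cycle (N _), ← trace_sum, ← Finset.sum_mul, hN, one_mul]

theorem trace_loopStep_add_trace {M₀ : Matrix (Fin d) (Fin d) ℂ} (hN : ∑ i, (N i)ᴴ * N i = 1)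
    (hM : M₀ᴴ * M₀ + M₁ᴴ * M₁ = 1) (σ : Matrix (Fin d) (Fin d) ℂ) :
    (loopStep N M₁ σ).trace + (M₀ * σ * M₀ᴴ).trace = σ.trace := by
  rw [trace_loopStep N M₁ hN, trace_mul_cycle M₁, trace_mul_cycle M₀, ← trace_add, ← add_mul,
    add_comm, hM, one_mul]

end Loop

theorem ast_iff_finite_expected_runtime_general
    (d m : ℕ)
    (N : Fin m → Matrix (Fin d) (Fin d) ℂ)
    (hN : ∑ i, (N i)ᴴ * N i = 1)
    (M₀ M₁ : Matrix (Fin d) (Fin d) ℂ)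
    (hM : M₀ᴴ * M₀ + M₁ᴴ * M₁ = 1)
    (ρ : Matrix (Fin d) (Fin d) ℂ) (hρ : ρ.PosSemidef) :
    Summable (fun k : ℕ => (((loopStep N M₁)^[k] ρ).trace).re) ↔
      ∑' k : ℕ, ((M₀ * ((loopStep N M₁)^[k] ρ) * M₀ᴴ).trace).re = ρ.trace.re := by
  have hpsd (k : ℕ) : ((loopStep N M₁)^[k] ρ).PosSemidef :=
    Function.Iterate.rec _ hρ (fun _ => posSemidef_loopStep N M₁) k
  have hterminates := tsum_eq_iff_tendsto_zero_of_add_eq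
    (a := fun k => ((loopStep N M₁)^[k] ρ).trace.re)
    (b := fun k => (M₀ * (loopStep N M₁)^[k] ρ * M₀ᴴ).trace.re)
    (fun k => (Complex.nonneg_iff.mp (hpsd k).trace_nonneg).1)
    (fun k => (Complex.nonneg_iff.mp ((hpsd k).mul_mul_conjTranspose_same M₀).trace_nonneg).1)
    fun k => by
      rw [Function.iterate_succ_apply', ← Complex.add_re, trace_loopStep_add_trace N M₁ hN hM]
  refine ⟨fun hsum => hterminates.2 hsum.tendsto_atTop_zero, fun htsum => ?_⟩
  have htend := hterminates.1 htsum
  have hiter (k : ℕ) : (loopStep N M₁)^[k] ρ = (loopStepLinearMap N M₁ ^ k) ρ :=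
    (Module.End.pow_apply (loopStepLinearMap N M₁) k ρ).symm
  simp only [hiter] at hpsd htend ⊢
  simpa only [RCLike.re_to_complex] using summable_re_trace_pow_apply_of_tendsto_zero hpsd
    (by simpa only [RCLike.re_to_complex] using htend)

/-- A quantum while-loop with trace-preserving body terminates almost surely on a
positive input `ρ` iff its expected runtime `Σ_k tr(ℰ^k ρ)` is finite. -/
theorem ast_iff_finite_expected_runtime
    (d m : ℕ) (hd : 1 ≤ d) (hm : 1 ≤ m)
    (N : Fin m → Matrix (Fin d) (Fin d) ℂ)
    (hN : ∑ i, (N i)ᴴ * N i = 1)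
    (M₀ M₁ : Matrix (Fin d) (Fin d) ℂ)
    (hM : M₀ᴴ * M₀ + M₁ᴴ * M₁ = 1)
    (ρ : Matrix (Fin d) (Fin d) ℂ) (hρ : ρ.PosSemidef) :
    Summable (fun k : ℕ => (((loopStep N M₁)^[k] ρ).trace).re) ↔
      ∑' k : ℕ, ((M₀ * ((loopStep N M₁)^[k] ρ) * M₀ᴴ).trace).re = ρ.trace.re :=
  ast_iff_finite_expected_runtime_general d m N hN M₀ M₁ hM ρ hρ
end

section
/- Let d ≥ 1 and let N : ℕ → Matrix (Fin d) (Fin d) ℂ be a countable family of matrices such that for every vector ψ ∈ ℂ^d the family i ↦ ‖N_i ψ‖² is summable with Σ_i ‖N_i ψ‖² ≤ ‖ψ‖². Then the set V = { ψ ∈ ℂ^d : Σ_{i=0}^∞ ‖N_i ψ‖² = ‖ψ‖² } is a ℂ-linear subspace of ℂ^d (it contains 0 and is closed under addition and scalar multiplication). -/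
open Matrix

/-- The squared Hermitian (ℓ²) norm of a vector in `ℂ^d`. -/
noncomputable def normSq' {d : ℕ} (v : Fin d → ℂ) : ℝ := ∑ x, ‖v x‖ ^ 2

/-!
The termination defect `δ ψ = ‖ψ‖² - Σᵢ ‖Nᵢ ψ‖²` is nonnegative, scales by `|c|²` and, being a
difference of sums of squared norms of linear images of `ψ`, obeys the parallelogram law.
For `δ x = δ y = 0` the law gives `δ (x + y) + δ (x - y) = 0` with both terms nonnegative,
so the zero set of `δ`, which is `V`, is closed under addition.
-/

def ParallelogramLaw {E : Type*} [AddGroup E] (f : E → ℝ) : Prop :=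
  ∀ x y, f (x + y) + f (x - y) = 2 * f x + 2 * f y

namespace ParallelogramLaw

section AddGroup

variable {E : Type*} [AddGroup E] {f g : E → ℝ}

theorem apply_zero (hf : ParallelogramLaw f) : f 0 = 0 := by
  have h := hf 0 0
  simp only [add_zero, sub_zero] at h
  linarith

theorem sub (hf : ParallelogramLaw f) (hg : ParallelogramLaw g) :
    ParallelogramLaw (fun x => f x - g x) := fun x y => by
  linarith [hf x y, hg x y]

theorem comp {F G : Type*} [AddGroup F] [FunLike G F E] [AddMonoidHomClass G F E]
    (hf : ParallelogramLaw f) (φ : G) : ParallelogramLaw (f ∘ φ) := fun x y => by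
  simpa only [Function.comp, map_add, map_sub] using hf (φ x) (φ y)

theorem tsum {ι : Type*} {q : ι → E → ℝ} (hq : ∀ i, ParallelogramLaw (q i))
    (hs : ∀ x, Summable fun i => q i x) : ParallelogramLaw (fun x => ∑' i, q i x) := fun x y => by
  rw [← (hs _).tsum_add (hs _), ← tsum_mul_left, ← tsum_mul_left,
    ← ((hs x).mul_left 2).tsum_add ((hs y).mul_left 2)]
  exact tsum_congr fun i => hq i x y

end AddGroup

section Module

variable {𝕜 : Type*} [NormedField 𝕜] {M : Type*} [AddCommGroup M] [Module 𝕜 M] {f : M → ℝ}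

def kernel (hf : ParallelogramLaw f) (hf_nonneg : ∀ x, 0 ≤ f x)
    (hf_smul : ∀ (c : 𝕜) x, f (c • x) = ‖c‖ ^ 2 * f x) : Submodule 𝕜 M where
  carrier := {x | f x = 0}
  zero_mem' := hf.apply_zero
  add_mem' {x y} (hx : f x = 0) (hy : f y = 0) := show f (x + y) = 0 by
    linarith [hf x y, hf_nonneg (x + y), hf_nonneg (x - y)]
  smul_mem' c x (hx : f x = 0) := show f (c • x) = 0 by
    rw [hf_smul, hx, mul_zero]

theorem coe_kernel (hf : ParallelogramLaw f) (hf_nonneg : ∀ x, 0 ≤ f x)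
    (hf_smul : ∀ (c : 𝕜) x, f (c • x) = ‖c‖ ^ 2 * f x) :
    (hf.kernel hf_nonneg hf_smul : Set M) = {x | f x = 0} :=
  rfl

end Module

end ParallelogramLaw

theorem parallelogramLaw_normSq' {d : ℕ} : ParallelogramLaw (normSq' : (Fin d → ℂ) → ℝ) :=
  fun u v => by
    simp only [normSq', Finset.mul_sum, ← Finset.sum_add_distrib]
    refine Finset.sum_congr rfl fun x _ => ?_
    have h := parallelogram_law_with_norm ℂ (u x) (v x)
    simp only [Pi.add_apply, Pi.sub_apply, sq]
    linarith

theorem normSq'_smul {d : ℕ} (c : ℂ) (v : Fin d → ℂ) :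
    normSq' (c • v) = ‖c‖ ^ 2 * normSq' v := by
  simp only [normSq', Finset.mul_sum, Pi.smul_apply, smul_eq_mul, norm_mul, mul_pow]

theorem terminating_states_subspace_general
    (d : ℕ) (N : ℕ → Matrix (Fin d) (Fin d) ℂ)
    (hsum : ∀ ψ : Fin d → ℂ, Summable (fun i => normSq' (N i *ᵥ ψ)) ∧
      ∑' i : ℕ, normSq' (N i *ᵥ ψ) ≤ normSq' ψ) :
    ∃ V : Submodule ℂ (Fin d → ℂ),
      (V : Set (Fin d → ℂ)) = {ψ : Fin d → ℂ | ∑' i : ℕ, normSq' (N i *ᵥ ψ) = normSq' ψ} := by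
  let defect : (Fin d → ℂ) → ℝ := fun ψ => normSq' ψ - ∑' i, normSq' (N i *ᵥ ψ)
  have hpar : ParallelogramLaw defect := parallelogramLaw_normSq'.sub <|
    .tsum (fun i => parallelogramLaw_normSq'.comp (N i).mulVecLin) fun ψ => (hsum ψ).1
  have hnonneg : ∀ ψ, 0 ≤ defect ψ := fun ψ => sub_nonneg.2 (hsum ψ).2
  have hsmul : ∀ (c : ℂ) ψ, defect (c • ψ) = ‖c‖ ^ 2 * defect ψ := fun c ψ => by
    simp only [defect, mulVec_smul, normSq'_smul, tsum_mul_left, mul_sub]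
  refine ⟨hpar.kernel hnonneg hsmul, ?_⟩
  rw [hpar.coe_kernel]
  ext ψ
  exact sub_eq_zero.trans eq_comm

/-- The set of (unnormalised) pure states from which a quantum program with countable
Kraus family `N` almost surely terminates is a ℂ-linear subspace of `ℂ^d`. -/
theorem terminating_states_subspace
    (d : ℕ) (hd : 1 ≤ d) (N : ℕ → Matrix (Fin d) (Fin d) ℂ)
    (hsum : ∀ ψ : Fin d → ℂ, Summable (fun i => normSq' (N i *ᵥ ψ)) ∧
      ∑' i : ℕ, normSq' (N i *ᵥ ψ) ≤ normSq' ψ) :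
    ∃ V : Submodule ℂ (Fin d → ℂ),
      (V : Set (Fin d → ℂ)) = {ψ : Fin d → ℂ | ∑' i : ℕ, normSq' (N i *ᵥ ψ) = normSq' ψ} :=
  terminating_states_subspace_general d N hsum
end

section
/- Let d, m ≥ 1 and let N : Fin m → Matrix (Fin d) (Fin d) ℂ satisfy Σ_i N_iᴴ N_i ⊑ I in the Loewner order. Define ℰ(ρ) = Σ_i N_i ρ N_iᴴ. Then for every positive semidefinite d×d complex matrix ρ, the following are equivalent: (1) tr(ℰ^k(ρ)) → 0 as k → ∞; (2) the family of nonnegative reals k ↦ tr(ℰ^k(ρ)) is summable, i.e. Σ_{k=0}^∞ tr(ℰ^k(ρ)) < ∞. -/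
open Matrix Filter
open scoped ComplexOrder

/-- The Loewner order: `A ⊑ B` iff `B - A` is positive semidefinite. -/
def loewner {d : ℕ} (A B : Matrix (Fin d) (Fin d) ℂ) : Prop := (B - A).PosSemidef

/-- The trace-nonincreasing completely positive map `ℰ(σ) = Σ_i N_i σ N_iᴴ`. -/
noncomputable def cpMap {d m : ℕ} (N : Fin m → Matrix (Fin d) (Fin d) ℂ)
    (σ : Matrix (Fin d) (Fin d) ℂ) : Matrix (Fin d) (Fin d) ℂ :=
  ∑ i, N i * σ * (N i)ᴴ

/-!
The iterates `ℰ^k ρ` are positive semidefinite, and a positive semidefinite matrix has Frobenius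
norm at most its trace, so `tr ℰ^k ρ → 0` forces `ℰ^k ρ → 0`. On the stable subspace of `ℰ` (the
vectors whose orbit tends to `0`), which is finite-dimensional and invariant, pointwise convergence
of the powers to `0` is convergence in operator norm; hence some power of `ℰ` is a strict
contraction there, and the orbit of `ρ` decays geometrically.
-/

open Topology

section SummableOrbit

variable {𝕜 E F : Type*} [NontriviallyNormedField 𝕜]
  [NormedAddCommGroup E] [NormedSpace 𝕜 E] [NormedAddCommGroup F] [NormedSpace 𝕜 F]

theorem ContinuousLinearMap.tendsto_of_forall_tendsto_apply [CompleteSpace 𝕜]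
    [FiniteDimensional 𝕜 E] {ι : Type*} {l : Filter ι} {f : ι → E →L[𝕜] F} {g : E →L[𝕜] F}
    (h : ∀ y, Tendsto (fun i ↦ f i y) l (𝓝 (g y))) : Tendsto f l (𝓝 g) := by
  let b := Module.finBasis 𝕜 E
  obtain ⟨C, -, hC⟩ := b.exists_opNorm_le (F := F)
  rw [tendsto_iff_norm_sub_tendsto_zero]
  -- the operator norm of `u` is at most `C * ∑ j, ‖u (b j)‖`
  refine squeeze_zero (fun _ ↦ norm_nonneg _)
    (fun i ↦ hC (M := ∑ j, ‖(f i - g) (b j)‖) (Finset.sum_nonneg fun _ _ ↦ norm_nonneg _)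
      fun j ↦ Finset.single_le_sum (f := fun j ↦ ‖(f i - g) (b j)‖)
        (fun _ _ ↦ norm_nonneg _) (Finset.mem_univ j)) ?_
  simpa using (tendsto_finsetSum Finset.univ fun j _ ↦
    tendsto_iff_norm_sub_tendsto_zero.mp (h (b j))).const_mul C

theorem ContinuousLinearMap.norm_pow_apply_le {S : E →L[𝕜] E} {c : ℝ} (hS : ‖S‖ ≤ c) (n : ℕ)
    (y : E) : ‖(S ^ n) y‖ ≤ c ^ n * ‖y‖ := by
  induction n with
  | zero => simp
  | succ n ih =>
    calc ‖(S ^ (n + 1)) y‖ = ‖S ((S ^ n) y)‖ := by rw [pow_succ', mul_apply_eq_comp]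
      _ ≤ c * (c ^ n * ‖y‖) :=
        (S.le_opNorm _).trans (mul_le_mul hS ih (norm_nonneg _) ((norm_nonneg _).trans hS))
      _ = c ^ (n + 1) * ‖y‖ := by ring

theorem summable_of_forall_summable_mul_add {R : Type*} [AddCommGroup R] [TopologicalSpace R]
    [IsTopologicalAddGroup R] (k : ℕ) [NeZero k] {f : ℕ → R}
    (h : ∀ r, Summable fun q ↦ f (k * q + r)) : Summable f := by
  rw [Finset.sum_indicator_mod k f, Finset.sum_fn]
  refine summable_sum fun a _ ↦ ?_
  have := (summable_indicator_mod_iff_summable k a.val f).mpr (h a.val)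
  rwa [ZMod.natCast_zmod_val] at this

theorem ContinuousLinearMap.summable_norm_pow_apply_of_norm_pow_lt_one {S : E →L[𝕜] E} {k : ℕ}
    [NeZero k] (hS : ‖S ^ k‖ < 1) (y : E) : Summable fun n ↦ ‖(S ^ n) y‖ := by
  refine summable_of_forall_summable_mul_add k fun r ↦ ?_
  refine .of_nonneg_of_le (fun _ ↦ norm_nonneg _) (fun q ↦ ?_)
    ((summable_geometric_of_lt_one (norm_nonneg _) hS).mul_right ‖(S ^ r) y‖)
  rw [pow_add, pow_mul, mul_apply_eq_comp]
  exact norm_pow_apply_le le_rfl q _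

theorem Module.End.summable_norm_pow_apply_of_forall_tendsto [CompleteSpace 𝕜]
    [FiniteDimensional 𝕜 E] {T : Module.End 𝕜 E}
    (h : ∀ y, Tendsto (fun n ↦ (T ^ n) y) atTop (𝓝 0)) (y : E) :
    Summable fun n ↦ ‖(T ^ n) y‖ := by
  let S := LinearMap.toContinuousLinearMap T
  have hS : ∀ n, ⇑(S ^ n) = ⇑(T ^ n) := fun n ↦ by
    rw [FunLike.coe_pow_eq_iterate, Module.End.coe_pow]; rfl
  have hnorm : Tendsto (fun n ↦ ‖S ^ n‖) atTop (𝓝 0) := by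
    have := (ContinuousLinearMap.tendsto_of_forall_tendsto_apply (f := (S ^ ·)) (g := 0)
      fun y ↦ by simpa only [hS, _root_.zero_apply] using h y).norm
    rwa [norm_zero] at this
  obtain ⟨k, hk⟩ := (hnorm.eventually_lt_const one_pos).exists_forall_of_atTop
  have : NeZero (k + 1) := ⟨k.succ_ne_zero⟩
  simpa only [hS] using S.summable_norm_pow_apply_of_norm_pow_lt_one (hk (k + 1) k.le_succ) y

def Module.End.stableSubmodule (T : Module.End 𝕜 E) : Submodule 𝕜 E where
  carrier := {y | Tendsto (fun n ↦ (T ^ n) y) atTop (𝓝 0)}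
  zero_mem' := by simp
  add_mem' hy hz := by simpa using hy.add hz
  smul_mem' c _ hy := by simpa using hy.const_smul c

@[simp]
theorem Module.End.mem_stableSubmodule {T : Module.End 𝕜 E} {y : E} :
    y ∈ T.stableSubmodule ↔ Tendsto (fun n ↦ (T ^ n) y) atTop (𝓝 0) :=
  Iff.rfl

theorem Module.End.mapsTo_stableSubmodule (T : Module.End 𝕜 E) :
    ∀ y ∈ T.stableSubmodule, T y ∈ T.stableSubmodule := fun y hy ↦ by
  simpa [← Module.End.mul_apply, ← pow_succ] using (tendsto_add_atTop_iff_nat 1).mpr hy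

theorem Module.End.summable_norm_pow_apply_of_tendsto [CompleteSpace 𝕜] [FiniteDimensional 𝕜 E]
    (T : Module.End 𝕜 E) {x : E} (hx : Tendsto (fun n ↦ (T ^ n) x) atTop (𝓝 0)) :
    Summable fun n ↦ ‖(T ^ n) x‖ := by
  let S := T.restrict T.mapsTo_stableSubmodule
  have hS : ∀ n (y : T.stableSubmodule), ((S ^ n) y : E) = (T ^ n) y := fun n y ↦ by
    rw [Module.End.pow_restrict, LinearMap.restrict_apply]
  have hstable : ∀ y, Tendsto (fun n ↦ (S ^ n) y) atTop (𝓝 0) := fun y ↦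
    tendsto_subtype_rng.mpr <| by
      simpa only [hS, Submodule.coe_zero] using T.mem_stableSubmodule.mp y.2
  simpa only [Submodule.coe_norm, hS] using
    Module.End.summable_norm_pow_apply_of_forall_tendsto (T := S) hstable ⟨x, hx⟩

end SummableOrbit

attribute [local instance] Matrix.frobeniusNormedAddCommGroup Matrix.frobeniusNormedSpace

namespace Matrix

variable {m n 𝕜 : Type*} [Fintype m] [Fintype n] [RCLike 𝕜]

theorem frobenius_norm_sq_eq_re_trace_conjTranspose_mul_self (B : Matrix m n 𝕜) :
    ‖B‖ ^ 2 = RCLike.re (Bᴴ * B).trace := by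
  rw [frobenius_norm_def, ← Real.sqrt_eq_rpow, Real.sq_sqrt (by positivity)]
  simp [trace, mul_apply, RCLike.conj_mul, Finset.sum_comm (γ := m)]

open scoped MatrixOrder in
theorem PosSemidef.frobenius_norm_le_re_trace {A : Matrix n n 𝕜} (hA : A.PosSemidef) :
    ‖A‖ ≤ RCLike.re A.trace := by
  classical
  obtain ⟨B, rfl⟩ := CStarAlgebra.nonneg_iff_eq_star_mul_self.mp hA.nonneg
  calc ‖star B * B‖ ≤ ‖star B‖ * ‖B‖ := frobenius_norm_mul _ _
    _ = RCLike.re (star B * B).trace := by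
      rw [star_eq_conjTranspose, frobenius_norm_conjTranspose, ← sq,
        frobenius_norm_sq_eq_re_trace_conjTranspose_mul_self]

end Matrix

noncomputable def cpLinearMap {d m : ℕ} (N : Fin m → Matrix (Fin d) (Fin d) ℂ) :
    Module.End ℂ (Matrix (Fin d) (Fin d) ℂ) where
  toFun := cpMap N
  map_add' σ τ := by simp [cpMap, Matrix.mul_add, Matrix.add_mul, Finset.sum_add_distrib]
  map_smul' c σ := by simp [cpMap, Finset.smul_sum]

theorem posSemidef_cpMap {d m : ℕ} (N : Fin m → Matrix (Fin d) (Fin d) ℂ)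
    {σ : Matrix (Fin d) (Fin d) ℂ} (hσ : σ.PosSemidef) : (cpMap N σ).PosSemidef :=
  Finset.sum_induction _ _ (fun _ _ ↦ .add) .zero fun i _ ↦ hσ.mul_mul_conjTranspose_same (N i)

theorem trace_tendsto_zero_iff_summable_general
    (d m : ℕ)
    (N : Fin m → Matrix (Fin d) (Fin d) ℂ)
    (ρ : Matrix (Fin d) (Fin d) ℂ) (hρ : ρ.PosSemidef) :
    Tendsto (fun k : ℕ => (((cpMap N)^[k] ρ).trace).re) atTop (nhds 0) ↔
      Summable (fun k : ℕ => (((cpMap N)^[k] ρ).trace).re) := by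
  refine ⟨fun htrace ↦ ?_, Summable.tendsto_atTop_zero⟩
  have hiter : ∀ k, (cpLinearMap N ^ k) ρ = (cpMap N)^[k] ρ := fun k ↦ by
    rw [Module.End.coe_pow]; rfl
  have horbit : Tendsto (fun k ↦ (cpLinearMap N ^ k) ρ) atTop (𝓝 0) := by
    refine squeeze_zero_norm (fun k ↦ ?_) htrace
    rw [hiter]
    exact (Function.Iterate.rec Matrix.PosSemidef hρ (fun _ ↦ posSemidef_cpMap N) k
      ).frobenius_norm_le_re_trace
  have hsum := ((cpLinearMap N).summable_norm_pow_apply_of_tendsto horbit).of_norm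
  simp only [hiter] at hsum
  exact hsum.map (Complex.reAddGroupHom.comp (traceAddMonoidHom (Fin d) ℂ))
    (Complex.continuous_re.comp (continuous_id.matrix_trace))

/-- For a trace-nonincreasing completely positive map `ℰ` on a finite-dimensional space
and a positive semidefinite `ρ`, `tr(ℰ^k(ρ)) → 0` iff `Σ_k tr(ℰ^k(ρ))` converges. -/
theorem trace_tendsto_zero_iff_summable
    (d m : ℕ) (hd : 1 ≤ d) (hm : 1 ≤ m)
    (N : Fin m → Matrix (Fin d) (Fin d) ℂ)
    (hN : loewner (∑ i, (N i)ᴴ * N i) 1)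
    (ρ : Matrix (Fin d) (Fin d) ℂ) (hρ : ρ.PosSemidef) :
    Tendsto (fun k : ℕ => (((cpMap N)^[k] ρ).trace).re) atTop (nhds 0) ↔
      Summable (fun k : ℕ => (((cpMap N)^[k] ρ).trace).re) :=
  trace_tendsto_zero_iff_summable_general d m N ρ hρ
end

section
/- Let d, m ≥ 1 and let M : Fin m → Matrix (Fin d) (Fin d) ℂ satisfy Σ_i M_iᴴ M_i ⊑ I in the Loewner order. Let R = Σ_i M_i ⊗ conj(M_i) be the d²×d² matrix representation (Kronecker products with entrywise conjugates). Then: (1) every eigenvalue λ ∈ ℂ of R satisfies |λ| ≤ 1; and (2) for every eigenvalue λ with |λ| = 1, the generalised eigenspace of R for λ equals the eigenspace, i.e. ker((R − λI)²) = ker(R − λI) (equivalently, every Jordan block of R for λ has size 1). -/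
open Matrix
open scoped Kronecker ComplexOrder

/-- The matrix representation `R = Σ_i M_i ⊗ conj(M_i)` of the super-operator with
Kraus family `M`. -/
noncomputable def matRep {d m : ℕ} (M : Fin m → Matrix (Fin d) (Fin d) ℂ) :
    Matrix (Fin d × Fin d) (Fin d × Fin d) ℂ :=
  ∑ i, M i ⊗ₖ (M i).map (starRingEnd ℂ)

/-! Under vectorisation, `(matRep M)ᴴ` is the Heisenberg-picture map `Ψ Y = ∑ i, (M i)ᴴ * Y * M i`.
The hypothesis `∑ i, (M i)ᴴ * M i ≤ 1` makes `Ψ` a contraction for the operator norm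
(Cauchy–Schwarz over `i`), so its powers are bounded. A power-bounded operator has its eigenvalues
in the closed unit disc and no Jordan chain of length two at an eigenvalue of modulus one, because
along such a chain `‖Ψ ^ n x‖` grows linearly in `n`. Both facts pass from `Rᴴ` to `R`: eigenvalues
get conjugated, and `ker (A * A) = ker A` is the rank condition `rank (A * A) = rank A`, which is
invariant under conjugate transposition. -/

open scoped InnerProductSpace

namespace ContinuousLinearMap

variable {𝕜 E F ι : Type*} [RCLike 𝕜] [NormedAddCommGroup E] [InnerProductSpace 𝕜 E]
  [CompleteSpace E] [NormedAddCommGroup F] [InnerProductSpace 𝕜 F] [CompleteSpace F] [Fintype ι]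
  {K : ι → E →L[𝕜] F}

open RCLike in
theorem sum_norm_apply_sq_le (hK : ∑ i, adjoint (K i) ∘L K i ≤ 1) (x : E) :
    ∑ i, ‖K i x‖ ^ 2 ≤ ‖x‖ ^ 2 := by
  have h := ((le_def _ _).1 hK).re_inner_nonneg_right x
  simp only [_root_.sub_apply, one_apply_eq_self, _root_.sum_apply, coe_comp, Function.comp_apply,
    inner_sub_right, inner_sum, adjoint_inner_right, map_sub, map_sum, inner_self_eq_norm_sq] at h
  linarith

theorem sum_norm_apply_mul_norm_apply_le (hK : ∑ i, adjoint (K i) ∘L K i ≤ 1) (x y : E) :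
    ∑ i, ‖K i x‖ * ‖K i y‖ ≤ ‖x‖ * ‖y‖ :=
  calc ∑ i, ‖K i x‖ * ‖K i y‖
      ≤ √(∑ i, ‖K i x‖ ^ 2) * √(∑ i, ‖K i y‖ ^ 2) := Real.sum_mul_le_sqrt_mul_sqrt _ _ _
    _ ≤ √(‖x‖ ^ 2) * √(‖y‖ ^ 2) := by
      gcongr <;> exact sum_norm_apply_sq_le hK _
    _ = ‖x‖ * ‖y‖ := by rw [Real.sqrt_sq (norm_nonneg _), Real.sqrt_sq (norm_nonneg _)]

open RCLike in
theorem norm_sum_adjoint_comp_comp_le (hK : ∑ i, adjoint (K i) ∘L K i ≤ 1) (Y : F →L[𝕜] F) :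
    ‖∑ i, adjoint (K i) ∘L Y ∘L K i‖ ≤ ‖Y‖ := by
  set Z := ∑ i, adjoint (K i) ∘L Y ∘L K i
  refine opNorm_le_bound _ (norm_nonneg Y) fun x => ?_
  have hZx : ‖Z x‖ ^ 2 ≤ ‖Y‖ * ‖x‖ * ‖Z x‖ :=
    calc ‖Z x‖ ^ 2 = re ⟪Z x, Z x⟫_𝕜 := (inner_self_eq_norm_sq _).symm
      _ = re ⟪Z x, ∑ i, adjoint (K i) (Y (K i x))⟫_𝕜 := by
        rw [← show Z x = ∑ i, adjoint (K i) (Y (K i x)) by simp [Z]]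
      _ = ∑ i, re ⟪K i (Z x), Y (K i x)⟫_𝕜 := by
        simp only [inner_sum, adjoint_inner_right, map_sum]
      _ ≤ ∑ i, ‖K i (Z x)‖ * (‖Y‖ * ‖K i x‖) := by
        gcongr with i
        exact (re_le_norm _).trans ((norm_inner_le_norm _ _).trans (by gcongr; exact le_opNorm _ _))
      _ = ‖Y‖ * ∑ i, ‖K i x‖ * ‖K i (Z x)‖ := by
        rw [Finset.mul_sum]; congr 1 with i; ring
      _ ≤ ‖Y‖ * (‖x‖ * ‖Z x‖) := by gcongr; exact sum_norm_apply_mul_norm_apply_le hK _ _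
      _ = ‖Y‖ * ‖x‖ * ‖Z x‖ := by ring
  rcases (norm_nonneg (Z x)).eq_or_lt with h | h
  · rw [← h]; positivity
  · nlinarith

end ContinuousLinearMap

namespace Module.End

variable {𝕜 E : Type*} [RCLike 𝕜] [NormedAddCommGroup E] [NormedSpace 𝕜 E]

def IsPowerBounded (T : Module.End 𝕜 E) : Prop :=
  ∃ C : ℝ, ∀ (n : ℕ) (x : E), ‖(T ^ n) x‖ ≤ C * ‖x‖

namespace IsPowerBounded

variable {T : Module.End 𝕜 E}

theorem of_norm_apply_le (hT : ∀ x, ‖T x‖ ≤ ‖x‖) : T.IsPowerBounded := by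
  refine ⟨1, fun n => ?_⟩
  induction n with
  | zero => simp
  | succ n ih =>
    intro x
    rw [pow_succ', mul_apply]
    exact (hT _).trans (ih x)

theorem norm_le_one (hT : T.IsPowerBounded) {μ : 𝕜} {x : E} (hx : x ≠ 0) (hTx : T x = μ • x) :
    ‖μ‖ ≤ 1 := by
  obtain ⟨C, hC⟩ := hT
  by_contra! hμ
  obtain ⟨n, hn⟩ := pow_unbounded_of_one_lt C hμ
  have hpow : (T ^ n) x = μ ^ n • x := HasEigenvector.pow_apply ⟨mem_eigenspace_iff.2 hTx, hx⟩ n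
  have := hC n x
  rw [hpow, norm_smul, norm_pow] at this
  nlinarith [norm_pos_iff.2 hx]

theorem eq_zero_of_apply_eq_smul_add (hT : T.IsPowerBounded) {μ : 𝕜} (hμ : ‖μ‖ = 1) {x w : E}
    (hx : T x = μ • x + w) (hw : T w = μ • w) : w = 0 := by
  obtain ⟨C, hC⟩ := hT
  -- `(T ^ n) x = μ ^ n • x + n μ ^ (n - 1) • w`, multiplied by `μ` to avoid `n - 1`
  have hpow (n : ℕ) : μ • (T ^ n) x = μ ^ n • (μ • x + (n : 𝕜) • w) := by
    induction n with
    | zero => simp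
    | succ n ih =>
      rw [pow_succ', mul_apply, ← map_smul, ih]
      simp only [map_smul, map_add, hx, hw]
      push_cast
      module
  have hbound (n : ℕ) : n * ‖w‖ ≤ (C + 1) * ‖x‖ :=
    calc n * ‖w‖ = ‖(μ • x + (n : 𝕜) • w) - μ • x‖ := by simp [norm_smul]
      _ ≤ ‖μ • x + (n : 𝕜) • w‖ + ‖μ • x‖ := norm_sub_le _ _
      _ = ‖(T ^ n) x‖ + ‖x‖ := by
        rw [norm_smul μ x, hμ, one_mul, ← one_mul ‖(T ^ n) x‖, ← hμ, ← norm_smul, hpow,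
          norm_smul, norm_pow, hμ, one_pow, one_mul]
      _ ≤ (C + 1) * ‖x‖ := by linarith [hC n x]
  by_contra hw0
  obtain ⟨n, hn⟩ := exists_nat_gt ((C + 1) * ‖x‖ / ‖w‖)
  rw [div_lt_iff₀ (norm_pos_iff.2 hw0)] at hn
  linarith [hbound n]

end IsPowerBounded

end Module.End

namespace Matrix

section krausDual

variable {𝕜 n ι : Type*} [RCLike 𝕜] [Fintype n] [DecidableEq n] [Fintype ι]

def krausDual (M : ι → Matrix n n 𝕜) : Module.End 𝕜 (Matrix n n 𝕜) :=
  ∑ i, LinearMap.mulLeft 𝕜 (M i)ᴴ ∘ₗ LinearMap.mulRight 𝕜 (M i)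

theorem krausDual_apply (M : ι → Matrix n n 𝕜) (Y : Matrix n n 𝕜) :
    krausDual M Y = ∑ i, (M i)ᴴ * Y * M i := by
  simp [krausDual, Matrix.mul_assoc]

open scoped Matrix.Norms.L2Operator in
theorem norm_krausDual_apply_le {M : ι → Matrix n n 𝕜} (hM : (1 - ∑ i, (M i)ᴴ * M i).PosSemidef)
    (Y : Matrix n n 𝕜) : ‖krausDual M Y‖ ≤ ‖Y‖ := by
  have hT (A : Matrix n n 𝕜) : toEuclideanCLM (n := n) (𝕜 := 𝕜) Aᴴ =
      ContinuousLinearMap.adjoint (toEuclideanCLM (n := n) (𝕜 := 𝕜) A) := by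
    rw [← star_eq_conjTranspose, map_star, ContinuousLinearMap.star_eq_adjoint]
  have hK : ∑ i, ContinuousLinearMap.adjoint (toEuclideanCLM (n := n) (𝕜 := 𝕜) (M i)) ∘L
      toEuclideanCLM (n := n) (𝕜 := 𝕜) (M i) ≤ 1 := by
    rw [ContinuousLinearMap.le_def, ← ContinuousLinearMap.isPositive_toLinearMap_iff]
    convert Matrix.isPositive_toEuclideanLin_iff.2 hM
    simp only [← hT, ← ContinuousLinearMap.mul_def, ← map_mul, ← map_sum,
      ← map_one (toEuclideanCLM (n := n) (𝕜 := 𝕜)), ← map_sub]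
    rfl
  rw [cstar_norm_def, cstar_norm_def Y]
  convert ContinuousLinearMap.norm_sum_adjoint_comp_comp_le hK
    (toEuclideanCLM (n := n) (𝕜 := 𝕜) Y) using 2
  simp only [krausDual_apply, Matrix.mul_assoc, map_sum, map_mul, hT, ContinuousLinearMap.mul_def]

open scoped Matrix.Norms.L2Operator in
theorem isPowerBounded_krausDual {M : ι → Matrix n n 𝕜}
    (hM : (1 - ∑ i, (M i)ᴴ * M i).PosSemidef) : (krausDual M).IsPowerBounded :=
  .of_norm_apply_le (norm_krausDual_apply_le hM)

end krausDual

section Field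

variable {n K : Type*} [Fintype n] [Field K]

theorem exists_conjTranspose_mulVec_eq_star_smul [DecidableEq n] [StarRing K] {A : Matrix n n K}
    {μ : K} {v : n → K} (hv0 : v ≠ 0) (hv : A *ᵥ v = μ • v) : ∃ w ≠ 0, Aᴴ *ᵥ w = star μ • w := by
  have hdet : (A - μ • 1).det = 0 :=
    exists_mulVec_eq_zero_iff.1 ⟨v, hv0, by rw [sub_mulVec, hv, smul_mulVec, one_mulVec, sub_self]⟩
  have hdet' : (Aᴴ - star μ • 1).det = 0 := by
    rw [← conjTranspose_one, ← conjTranspose_smul, ← conjTranspose_sub, det_conjTranspose, hdet,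
      star_zero]
  obtain ⟨w, hw0, hw⟩ := exists_mulVec_eq_zero_iff.2 hdet'
  exact ⟨w, hw0, by rwa [sub_mulVec, smul_mulVec, one_mulVec, sub_eq_zero] at hw⟩

theorem ker_mulVecLin_mul_self_eq_iff_rank_eq (A : Matrix n n K) :
    LinearMap.ker (A * A).mulVecLin = LinearMap.ker A.mulVecLin ↔ (A * A).rank = A.rank := by
  have hle : LinearMap.ker A.mulVecLin ≤ LinearMap.ker (A * A).mulVecLin := by
    rw [mulVecLin_mul]; exact LinearMap.ker_le_ker_comp _ _
  have h₁ := LinearMap.finrank_range_add_finrank_ker (A * A).mulVecLin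
  have h₂ := LinearMap.finrank_range_add_finrank_ker A.mulVecLin
  rw [rank, rank]
  constructor
  · intro h; rw [h] at h₁; omega
  · intro h; exact (Submodule.eq_of_le_of_finrank_eq hle (by omega)).symm

variable [StarRing K] [PartialOrder K] [StarOrderedRing K]

theorem ker_mulVecLin_mul_self_eq_of_conjTranspose {A : Matrix n n K}
    (h : LinearMap.ker (Aᴴ * Aᴴ).mulVecLin = LinearMap.ker Aᴴ.mulVecLin) :
    LinearMap.ker (A * A).mulVecLin = LinearMap.ker A.mulVecLin := by
  rw [ker_mulVecLin_mul_self_eq_iff_rank_eq] at h ⊢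
  rwa [← conjTranspose_mul, rank_conjTranspose, rank_conjTranspose] at h

end Field

end Matrix

section matRep

open scoped Matrix.Norms.L2Operator

variable {d m : ℕ} {M : Fin m → Matrix (Fin d) (Fin d) ℂ}

theorem conjTranspose_matRep_mulVec_vec_transpose (Y : Matrix (Fin d) (Fin d) ℂ) :
    (matRep M)ᴴ *ᵥ vec Yᵀ = vec (krausDual M Y)ᵀ := by
  have h (A : Matrix (Fin d) (Fin d) ℂ) : (A.map (starRingEnd ℂ))ᴴ = Aᵀ := by ext; simp
  simp only [matRep, conjTranspose_sum, conjTranspose_kronecker, h, sum_mulVec,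
    kronecker_mulVec_vec, krausDual_apply, transpose_sum, vec_sum, transpose_mul, Matrix.mul_assoc]

-- `vec Yᵀ` is the row-major vectorisation `(a, b) ↦ Y a b`, so `vec (of fun a b => v (a, b))ᵀ` is
-- `v` by definition
theorem krausDual_of_eq_smul_add {μ : ℂ} {v w : Fin d × Fin d → ℂ}
    (h : (matRep M)ᴴ *ᵥ v = μ • v + w) :
    krausDual M (of fun a b => v (a, b)) =
      μ • (of fun a b => v (a, b)) + of fun a b => w (a, b) := by
  rw [← transpose_inj, ← vec_inj, transpose_add, transpose_smul, vec_add, vec_smul,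
    ← conjTranspose_matRep_mulVec_vec_transpose]
  exact h

theorem krausDual_of_eq_smul {μ : ℂ} {v : Fin d × Fin d → ℂ} (h : (matRep M)ᴴ *ᵥ v = μ • v) :
    krausDual M (of fun a b => v (a, b)) = μ • of fun a b => v (a, b) := by
  rw [← transpose_inj, ← vec_inj, transpose_smul, vec_smul,
    ← conjTranspose_matRep_mulVec_vec_transpose]
  exact h

theorem norm_le_one_of_conjTranspose_matRep_mulVec_eq_smul (hM : loewner (∑ i, (M i)ᴴ * M i) 1)
    {μ : ℂ} {v : Fin d × Fin d → ℂ} (hv0 : v ≠ 0) (hv : (matRep M)ᴴ *ᵥ v = μ • v) : ‖μ‖ ≤ 1 := by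
  refine (isPowerBounded_krausDual hM).norm_le_one (x := of fun a b => v (a, b)) ?_ ?_
  · exact fun h => hv0 (congrArg (fun Y => vec Yᵀ) h)
  · exact krausDual_of_eq_smul hv

theorem ker_mulVecLin_mul_self_conjTranspose_matRep_sub (hM : loewner (∑ i, (M i)ᴴ * M i) 1) {μ : ℂ}
    (hμ : ‖μ‖ = 1) :
    LinearMap.ker (((matRep M)ᴴ - μ • 1) * ((matRep M)ᴴ - μ • 1)).mulVecLin =
      LinearMap.ker ((matRep M)ᴴ - μ • 1).mulVecLin := by
  set B := (matRep M)ᴴ - μ • 1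
  refine le_antisymm (fun v hv => ?_) (by rw [mulVecLin_mul]; exact LinearMap.ker_le_ker_comp _ _)
  rw [LinearMap.mem_ker, mulVecLin_apply, ← mulVec_mulVec] at hv
  rw [LinearMap.mem_ker, mulVecLin_apply]
  have hB (u : Fin d × Fin d → ℂ) : (matRep M)ᴴ *ᵥ u = μ • u + B *ᵥ u := by
    simp [B, sub_mulVec, smul_mulVec]
  have hW := (isPowerBounded_krausDual hM).eq_zero_of_apply_eq_smul_add hμ
    (krausDual_of_eq_smul_add (hB v)) (krausDual_of_eq_smul (by rw [hB, hv, add_zero]))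
  exact congrArg (fun Y => vec Yᵀ) hW

end matRep

theorem matRep_eigenvalue_bound_and_peripheral_diagonalisable_general
    (d m : ℕ)
    (M : Fin m → Matrix (Fin d) (Fin d) ℂ)
    (hM : loewner (∑ i, (M i)ᴴ * M i) 1) :
    (∀ lam : ℂ,
      (∃ v : Fin d × Fin d → ℂ, v ≠ 0 ∧ matRep M *ᵥ v = lam • v) → ‖lam‖ ≤ 1) ∧
    (∀ lam : ℂ, ‖lam‖ = 1 →
      {v : Fin d × Fin d → ℂ |
          ((matRep M - lam • 1) * (matRep M - lam • 1)) *ᵥ v = 0}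
        = {v : Fin d × Fin d → ℂ | (matRep M - lam • 1) *ᵥ v = 0}) := by
  refine ⟨fun lam ⟨v, hv0, hv⟩ => ?_, fun lam hlam => ?_⟩
  · obtain ⟨w, hw0, hw⟩ := exists_conjTranspose_mulVec_eq_star_smul hv0 hv
    simpa using norm_le_one_of_conjTranspose_matRep_mulVec_eq_smul hM hw0 hw
  · have hA : (matRep M - lam • 1)ᴴ = (matRep M)ᴴ - star lam • 1 := by simp
    have hker := ker_mulVecLin_mul_self_eq_of_conjTranspose
      (hA ▸ ker_mulVecLin_mul_self_conjTranspose_matRep_sub hM (by simpa using hlam))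
    exact congrArg SetLike.coe hker

/-- Jordan structure of the matrix representation of a trace-nonincreasing
super-operator: all eigenvalues have modulus at most `1`, and eigenvalues of
modulus `1` have one-dimensional Jordan blocks (their generalised eigenspace
equals their eigenspace). -/
theorem matRep_eigenvalue_bound_and_peripheral_diagonalisable
    (d m : ℕ) (hd : 1 ≤ d) (hm : 1 ≤ m)
    (M : Fin m → Matrix (Fin d) (Fin d) ℂ)
    (hM : loewner (∑ i, (M i)ᴴ * M i) 1) :
    (∀ lam : ℂ,
      (∃ v : Fin d × Fin d → ℂ, v ≠ 0 ∧ matRep M *ᵥ v = lam • v) → ‖lam‖ ≤ 1) ∧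
    (∀ lam : ℂ, ‖lam‖ = 1 →
      {v : Fin d × Fin d → ℂ |
          ((matRep M - lam • 1) * (matRep M - lam • 1)) *ᵥ v = 0}
        = {v : Fin d × Fin d → ℂ | (matRep M - lam • 1) *ᵥ v = 0}) :=
  matRep_eigenvalue_bound_and_peripheral_diagonalisable_general d m M hM
end

section
/- Let d ≥ 1 and let (A_k)_{k∈ℕ} be a sequence of positive semidefinite d×d complex matrices increasing in the Loewner order (A_k ⊑ A_{k+1} for all k). Let P₁ and P₂ be orthogonal projections on ℂ^d (P_iᴴ = P_i and P_i² = P_i) with orthogonal ranges, i.e. P₁P₂ = 0 (so P₁ + P₂ is the orthogonal projection onto the sum of their ranges). If the set {P₁ A_k P₁ : k ∈ ℕ} has a least upper bound in the Loewner order and the set {P₂ A_k P₂ : k ∈ ℕ} has a least upper bound in the Loewner order, then the set {(P₁ + P₂) A_k (P₁ + P₂) : k ∈ ℕ} has a least upper bound in the Loewner order. -/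
/-!
The Loewner order is not a lattice, but an increasing sequence of matrices that is bounded
above still has a least upper bound: by order-boundedness it stays in a norm ball, so by
compactness a subsequence converges, and since the positive semidefinite cone is closed the
limit is the supremum. With `Q = P₁ + P₂` the compressions `Q A_k Q` increase, and the
parallelogram identity `Q A Q + (P₁ - P₂) A (P₁ - P₂) = 2 (P₁ A P₁ + P₂ A P₂)` bounds them
by `2 (B₁ + B₂)`.
-/

open Matrix
open scoped ComplexOrder

open Set Filter Topology

theorem Monotone.isLUB_range_of_tendsto_comp {α : Type*} [TopologicalSpace α] [Preorder α]
    [OrderClosedTopology α] {f : ℕ → α} {φ : ℕ → ℕ} {a : α} (hf : Monotone f)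
    (hφ : StrictMono φ) (h : Tendsto (f ∘ φ) atTop (𝓝 a)) : IsLUB (range f) a := by
  have hsub := isLUB_of_tendsto_atTop (hf.comp hφ.monotone) h
  refine ⟨forall_mem_range.2 fun k => (hf (hφ.id_le k)).trans (hsub.1 (mem_range_self k)), ?_⟩
  exact fun b hb => hsub.2 (forall_mem_range.2 fun k => hb (mem_range_self (φ k)))

theorem CStarAlgebra.exists_isLUB_range_of_monotone {A : Type*} [NonUnitalCStarAlgebra A]
    [PartialOrder A] [StarOrderedRing A] [ProperSpace A] {f : ℕ → A} (hf : Monotone f)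
    (hbdd : BddAbove (range f)) : ∃ a, IsLUB (range f) a := by
  obtain ⟨u, hu⟩ := hbdd
  have hball (n : ℕ) : f n ∈ Metric.closedBall (f 0) ‖u - f 0‖ := by
    rw [mem_closedBall_iff_norm]
    exact CStarAlgebra.norm_le_norm_of_nonneg_of_le (sub_nonneg.2 (hf n.zero_le))
      (sub_le_sub_right (hu (mem_range_self n)) _)
  obtain ⟨a, -, φ, hφ, hlim⟩ := tendsto_subseq_of_bounded Metric.isBounded_closedBall hball
  exact ⟨a, hf.isLUB_range_of_tendsto_comp hφ hlim⟩

theorem star_left_conjugate_add_le_two_nsmul {R : Type*} [NonUnitalRing R] [PartialOrder R]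
    [StarRing R] [StarOrderedRing R] {x : R} (hx : 0 ≤ x) (a b : R) :
    star (a + b) * x * (a + b) ≤ 2 • (star a * x * a + star b * x * b) := by
  have hdiff := star_left_conjugate_nonneg hx (a - b)
  have hsum : star (a + b) * x * (a + b) + star (a - b) * x * (a - b)
      = 2 • (star a * x * a + star b * x * b) := by
    simp only [star_add, star_sub, add_mul, sub_mul, mul_add, mul_sub, two_nsmul]; abel
  rw [← hsum]
  exact le_add_of_nonneg_right hdiff

-- `loewner A B` is definitionally `A ≤ B` for `MatrixOrder`, and the operator norm makes
-- matrices a C⋆-algebra, so the general lemmas above apply.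
open scoped MatrixOrder Matrix.Norms.L2Operator

theorem lub_of_compression_sum_general
    (d : ℕ) (A : ℕ → Matrix (Fin d) (Fin d) ℂ)
    (hpos : ∀ k, (A k).PosSemidef)
    (hmono : ∀ k, loewner (A k) (A (k + 1)))
    (P₁ P₂ : Matrix (Fin d) (Fin d) ℂ)
    (hP₁herm : P₁ᴴ = P₁)
    (hP₂herm : P₂ᴴ = P₂)
    (h₁ : ∃ B₁ : Matrix (Fin d) (Fin d) ℂ,
      (∀ k, loewner (P₁ * A k * P₁) B₁) ∧
      ∀ C : Matrix (Fin d) (Fin d) ℂ, (∀ k, loewner (P₁ * A k * P₁) C) → loewner B₁ C)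
    (h₂ : ∃ B₂ : Matrix (Fin d) (Fin d) ℂ,
      (∀ k, loewner (P₂ * A k * P₂) B₂) ∧
      ∀ C : Matrix (Fin d) (Fin d) ℂ, (∀ k, loewner (P₂ * A k * P₂) C) → loewner B₂ C) :
    ∃ B : Matrix (Fin d) (Fin d) ℂ,
      (∀ k, loewner ((P₁ + P₂) * A k * (P₁ + P₂)) B) ∧
      ∀ C : Matrix (Fin d) (Fin d) ℂ,
        (∀ k, loewner ((P₁ + P₂) * A k * (P₁ + P₂)) C) → loewner B C := by
  obtain ⟨B₁, hB₁, -⟩ := h₁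
  obtain ⟨B₂, hB₂, -⟩ := h₂
  have hstar : star (P₁ + P₂) = P₁ + P₂ := by
    rw [star_eq_conjTranspose, conjTranspose_add, hP₁herm, hP₂herm]
  have hcomp_mono : Monotone fun k => (P₁ + P₂) * A k * (P₁ + P₂) :=
    monotone_nat_of_le_succ fun k => by
      simpa only [hstar] using star_left_conjugate_le_conjugate (hmono k) (P₁ + P₂)
  have hcomp_bdd : BddAbove (range fun k => (P₁ + P₂) * A k * (P₁ + P₂)) := by
    refine ⟨2 • (B₁ + B₂), forall_mem_range.2 fun k => ?_⟩
    calc (P₁ + P₂) * A k * (P₁ + P₂)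
        ≤ 2 • (P₁ * A k * P₁ + P₂ * A k * P₂) := by
          simpa only [hstar, star_eq_conjTranspose, hP₁herm, hP₂herm]
            using star_left_conjugate_add_le_two_nsmul (hpos k).nonneg P₁ P₂
      _ ≤ 2 • (B₁ + B₂) := nsmul_le_nsmul_right (add_le_add (hB₁ k) (hB₂ k)) 2
  obtain ⟨B, hB⟩ := CStarAlgebra.exists_isLUB_range_of_monotone hcomp_mono hcomp_bdd
  exact ⟨B, fun k => hB.1 (mem_range_self k), fun C hC => hB.2 (forall_mem_range.2 hC)⟩

/-- If the compressions of an increasing sequence of positive matrices by two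
orthogonal projections `P₁, P₂` with orthogonal ranges each have a Loewner least
upper bound, then so does the compression by `P₁ + P₂`. -/
theorem lub_of_compression_sum
    (d : ℕ) (hd : 1 ≤ d) (A : ℕ → Matrix (Fin d) (Fin d) ℂ)
    (hpos : ∀ k, (A k).PosSemidef)
    (hmono : ∀ k, loewner (A k) (A (k + 1)))
    (P₁ P₂ : Matrix (Fin d) (Fin d) ℂ)
    (hP₁herm : P₁ᴴ = P₁) (hP₁idem : P₁ * P₁ = P₁)
    (hP₂herm : P₂ᴴ = P₂) (hP₂idem : P₂ * P₂ = P₂)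
    (horth : P₁ * P₂ = 0)
    (h₁ : ∃ B₁ : Matrix (Fin d) (Fin d) ℂ,
      (∀ k, loewner (P₁ * A k * P₁) B₁) ∧
      ∀ C : Matrix (Fin d) (Fin d) ℂ, (∀ k, loewner (P₁ * A k * P₁) C) → loewner B₁ C)
    (h₂ : ∃ B₂ : Matrix (Fin d) (Fin d) ℂ,
      (∀ k, loewner (P₂ * A k * P₂) B₂) ∧
      ∀ C : Matrix (Fin d) (Fin d) ℂ, (∀ k, loewner (P₂ * A k * P₂) C) → loewner B₂ C) :
    ∃ B : Matrix (Fin d) (Fin d) ℂ,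
      (∀ k, loewner ((P₁ + P₂) * A k * (P₁ + P₂)) B) ∧
      ∀ C : Matrix (Fin d) (Fin d) ℂ,
        (∀ k, loewner ((P₁ + P₂) * A k * (P₁ + P₂)) C) → loewner B C :=
  lub_of_compression_sum_general d A hpos hmono P₁ P₂ hP₁herm hP₂herm h₁ h₂
end

section
/- Let n ≥ 2 and let a, b be real numbers with a² + b² = 1 and a ≠ 0. Work with complex matrices indexed by Fin 2 × Fin n (coin value L = 0 or R = 1, position in Fin n; arithmetic ⊕, ⊖ on positions is addition/subtraction modulo n). Define: T = !![a, b; b, −a] (acting on the coin), the shift S = Σ_{i=0}^{n−1} |L⟩⟨L| ⊗ |i ⊖ 1⟩⟨i| + Σ_{i=0}^{n−1} |R⟩⟨R| ⊗ |i ⊕ 1⟩⟨i|, M₁ = I₂ ⊗ (Σ_{k=1}^{n−1} |k⟩⟨k|), and E = M₁ᴴ (T ⊗ Iₙ)ᴴ Sᴴ. For integers j, k with j ≡ k (mod 2) set f(j,k) = (−1)^{(j−k)/2} · (b²/a²) · j · (n − 1 − k) and h(j,k) = (−1)^{(j−k)/2} · (b/a) · (j + k − n). Define n×n real matrices A, B,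 C by: A(j,j) = f(j,j) + j + 1; A(j,k) = f(j,k) if j < k and 2 ∣ (j − k); A(j,k) = f(k,j) if k < j and 2 ∣ (j − k); A(j,k) = 0 otherwise; B(j,k) = h(j,k) if 0 < j ≤ k < n and 2 ∣ (j − k), and B(j,k) = 0 otherwise; C(j,k) = A(n ⊖ j, n ⊖ k). Let X be the (2n)×(2n) block matrix with X((L,j),(L,k)) = A(j,k), X((L,j),(R,k)) = Bᴴ(j,k), X((R,j),(L,k)) = B(j,k), X((R,j),(R,k)) = C(j,k). Then X = I + E X Eᴴ. -/
/-!
The matrix `E` annihilates position `0`, so the equation says that row and column `0` of `X`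
are those of the identity, and that for interior positions `j, k ∈ {1, …, n - 1}` every entry
of `X` is `δ` plus the `T`-weighted combination of the entries at positions `j ∓ 1, k ∓ 1`.
Extending `A` and `B` to integer indices absorbs the wrap-around `n ≡ 0` of the circle
(`B` vanishes in row `n`, and `C (j + 1) (k + 1) = A (n - 1 - j) (n - 1 - k)`), and the
recurrences become identities between the closed forms `f` and `h`, checked by cases on the
order and parity of `j, k` using `a² + b² = 1`. The recurrence for `C` is the one for `A`
seen through the reflection `x ↦ n - x` of the circle, and since both sides of the equation
are Hermitian, the `(L, R)` block follows from the `(R, L)` block.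
-/

open Matrix
open scoped Kronecker

/-- The coin-tossing operator `T = !![a, b; b, -a]`. -/
noncomputable def coinT (a b : ℝ) : Matrix (Fin 2) (Fin 2) ℂ :=
  !![(a : ℂ), (b : ℂ); (b : ℂ), -(a : ℂ)]

/-- The shift operator of the quantum walk on the `n`-circle:
`S = Σ_i |L⟩⟨L| ⊗ |i ⊖ 1⟩⟨i| + Σ_i |R⟩⟨R| ⊗ |i ⊕ 1⟩⟨i|`. -/
noncomputable def shiftS (n : ℕ) [NeZero n] : Matrix (Fin 2 × Fin n) (Fin 2 × Fin n) ℂ :=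
  (∑ i : Fin n, single (0 : Fin 2) (0 : Fin 2) (1 : ℂ) ⊗ₖ
      single (i - 1) i (1 : ℂ)) +
  (∑ i : Fin n, single (1 : Fin 2) (1 : Fin 2) (1 : ℂ) ⊗ₖ
      single (i + 1) i (1 : ℂ))

/-- The measurement operator `M₁ = I₂ ⊗ Σ_{k=1}^{n-1} |k⟩⟨k|`. -/
noncomputable def measM1 (n : ℕ) [NeZero n] : Matrix (Fin 2 × Fin n) (Fin 2 × Fin n) ℂ :=
  (1 : Matrix (Fin 2) (Fin 2) ℂ) ⊗ₖ
    (∑ k ∈ Finset.univ.erase (0 : Fin n), single k k (1 : ℂ))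

/-- One backward step `E = M₁ᴴ (T ⊗ Iₙ)ᴴ Sᴴ` of the quantum walk on the `n`-circle. -/
noncomputable def stepE (n : ℕ) [NeZero n] (a b : ℝ) :
    Matrix (Fin 2 × Fin n) (Fin 2 × Fin n) ℂ :=
  (measM1 n)ᴴ * (coinT a b ⊗ₖ (1 : Matrix (Fin n) (Fin n) ℂ))ᴴ * (shiftS n)ᴴ

/-- `f(j,k) = (−1)^((j−k)/2) · (b²/a²) · j · (n − 1 − k)`. -/
noncomputable def fEnt (n : ℕ) (a b : ℝ) (j k : ℤ) : ℂ :=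
  (-1 : ℂ) ^ ((j - k) / 2) * ((b : ℂ) ^ 2 / (a : ℂ) ^ 2) * (j : ℂ) * ((n : ℂ) - 1 - (k : ℂ))

/-- `h(j,k) = (−1)^((j−k)/2) · (b/a) · (j + k − n)`. -/
noncomputable def hEnt (n : ℕ) (a b : ℝ) (j k : ℤ) : ℂ :=
  (-1 : ℂ) ^ ((j - k) / 2) * ((b : ℂ) / (a : ℂ)) * ((j : ℂ) + (k : ℂ) - (n : ℂ))

/-- The diagonal block `A` of the expected-steps observable. -/
noncomputable def blockA (n : ℕ) [NeZero n] (a b : ℝ) : Matrix (Fin n) (Fin n) ℂ :=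
  Matrix.of fun j k : Fin n =>
    if j = k then fEnt n a b j j + ((j : ℕ) : ℂ) + 1
    else if (j : ℕ) < (k : ℕ) ∧ (2 : ℤ) ∣ ((j : ℤ) - (k : ℤ)) then fEnt n a b j k
    else if (k : ℕ) < (j : ℕ) ∧ (2 : ℤ) ∣ ((j : ℤ) - (k : ℤ)) then fEnt n a b k j
    else 0

/-- The off-diagonal block `B` of the expected-steps observable. -/
noncomputable def blockB (n : ℕ) [NeZero n] (a b : ℝ) : Matrix (Fin n) (Fin n) ℂ :=
  Matrix.of fun j k : Fin n =>
    if 0 < (j : ℕ) ∧ (j : ℕ) ≤ (k : ℕ) ∧ (2 : ℤ) ∣ ((j : ℤ) - (k : ℤ)) then hEnt n a b j k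
    else 0

/-- The diagonal block `C`, given by `C(j,k) = A(n ⊖ j, n ⊖ k)`. -/
noncomputable def blockC (n : ℕ) [NeZero n] (a b : ℝ) : Matrix (Fin n) (Fin n) ℂ :=
  Matrix.of fun j k : Fin n => blockA n a b (-j) (-k)

/-- The full `2n × 2n` block matrix `X = [[A, Bᴴ], [B, C]]`. -/
noncomputable def fullX (n : ℕ) [NeZero n] (a b : ℝ) :
    Matrix (Fin 2 × Fin n) (Fin 2 × Fin n) ℂ :=
  Matrix.of fun p q : Fin 2 × Fin n =>
    if p.1 = 0 then
      (if q.1 = 0 then blockA n a b p.2 q.2 else (blockB n a b)ᴴ p.2 q.2)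
    else
      (if q.1 = 0 then blockB n a b p.2 q.2 else blockC n a b p.2 q.2)

lemma Matrix.IsHermitian.ext_of_total {α ι : Type*} [Star α] {A B : Matrix ι ι α}
    (hA : A.IsHermitian) (hB : B.IsHermitian) (r : ι → ι → Prop)
    (hr : ∀ i j, r i j ∨ r j i) (h : ∀ i j, r i j → A i j = B i j) : A = B := by
  ext i j
  rcases hr i j with hij | hji
  · exact h i j hij
  · rw [← hA.apply, ← hB.apply, h j i hji]

lemma conjTranspose_coinT_kronecker_one_mul_apply {ι κ : Type*} [Fintype ι] [DecidableEq ι]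
    (a b : ℝ) (M : Matrix (Fin 2 × ι) κ ℂ) (c : Fin 2) (j : ι) (q : κ) :
    ((coinT a b ⊗ₖ (1 : Matrix ι ι ℂ))ᴴ * M) (c, j) q =
      coinT a b c 0 * M (0, j) q + coinT a b c 1 * M (1, j) q := by
  fin_cases c <;> simp [mul_apply, Fintype.sum_prod_type, one_apply, coinT, apply_ite]

section Step

variable {n : ℕ} [NeZero n] {κ : Type*}

lemma shiftS_apply (c d : Fin 2) (i m : Fin n) :
    shiftS n (c, i) (d, m) = if c = d ∧ (if d = 0 then m - 1 else m + 1) = i then 1 else 0 := by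
  fin_cases c <;> fin_cases d <;>
    simp [shiftS, Matrix.sum_apply, single_apply, and_comm (b := _ = m), ite_and, -Finset.sum_boole]

lemma conjTranspose_shiftS_mul_apply (M : Matrix (Fin 2 × Fin n) κ ℂ) (c : Fin 2) (i : Fin n)
    (q : κ) : ((shiftS n)ᴴ * M) (c, i) q = M (c, if c = 0 then i - 1 else i + 1) q := by
  simp [mul_apply, Fintype.sum_prod_type, shiftS_apply, apply_ite (starRingEnd ℂ), ite_and]

lemma measM1_eq_diagonal : measM1 n = diagonal fun p => if p.2 = 0 then 0 else 1 := by
  ext ⟨c, j⟩ ⟨d, m⟩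
  simp only [measM1, kroneckerMap_apply, Matrix.sum_apply, single_apply, ite_and,
    Finset.sum_ite_eq', Finset.mem_erase, diagonal_apply, one_apply, Prod.ext_iff]
  by_cases hj : j = 0 <;> simp [hj, ← ite_and, and_comm]

lemma conjTranspose_measM1_mul_apply (M : Matrix (Fin 2 × Fin n) κ ℂ) (c : Fin 2) (j : Fin n)
    (q : κ) : ((measM1 n)ᴴ * M) (c, j) q = if j = 0 then 0 else M (c, j) q := by
  simp [measM1_eq_diagonal, diagonal_conjTranspose, apply_ite (starRingEnd ℂ)]

variable (a b : ℝ)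

lemma stepE_mul_apply (M : Matrix (Fin 2 × Fin n) κ ℂ) (c : Fin 2) (j : Fin n) (q : κ) :
    (stepE n a b * M) (c, j) q =
      if j = 0 then 0 else coinT a b c 0 * M (0, j - 1) q + coinT a b c 1 * M (1, j + 1) q := by
  simp only [stepE, Matrix.mul_assoc, conjTranspose_measM1_mul_apply,
    conjTranspose_coinT_kronecker_one_mul_apply, conjTranspose_shiftS_mul_apply]
  simp

lemma mul_conjTranspose_stepE_apply (M : Matrix κ (Fin 2 × Fin n) ℂ) (p : κ) (d : Fin 2)
    (k : Fin n) :
    (M * (stepE n a b)ᴴ) p (d, k) =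
      if k = 0 then 0 else M p (0, k - 1) * coinT a b d 0 + M p (1, k + 1) * coinT a b d 1 := by
  rw [← conjTranspose_conjTranspose M, ← conjTranspose_mul, conjTranspose_apply,
    stepE_mul_apply]
  fin_cases d <;> simp [apply_ite (star : ℂ → ℂ), coinT, mul_comm]

end Step

section IntegerEntries

variable (n : ℕ) (a b : ℝ)

/-- The entries of `A` and `B` on all of `ℤ × ℤ`, so that the neighbours `j ± 1` of a position
need no reduction mod `n`. -/
noncomputable def entryA (x y : ℤ) : ℂ :=
  if x = y then fEnt n a b x x + x + 1
  else if x < y ∧ 2 ∣ x - y then fEnt n a b x y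
  else if y < x ∧ 2 ∣ x - y then fEnt n a b y x
  else 0

noncomputable def entryB (x y : ℤ) : ℂ :=
  if 0 < x ∧ x ≤ y ∧ 2 ∣ x - y then hEnt n a b x y else 0

variable {n a b}

lemma fEnt_of_sub_eq {x y m : ℤ} (h : x - y = 2 * m) :
    fEnt n a b x y = (-1) ^ m * (b ^ 2 / a ^ 2 * x * (n - 1 - y)) := by
  rw [fEnt, h, Int.mul_ediv_cancel_left _ two_ne_zero]; ring

lemma hEnt_of_sub_eq {x y m : ℤ} (h : x - y = 2 * m) :
    hEnt n a b x y = (-1) ^ m * (b / a * (x + y - n)) := by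
  rw [hEnt, h, Int.mul_ediv_cancel_left _ two_ne_zero]; ring

lemma entryA_self (x : ℤ) : entryA n a b x x = fEnt n a b x x + x + 1 := if_pos rfl

lemma entryA_of_lt {x y : ℤ} (hxy : x < y) (h : 2 ∣ x - y) :
    entryA n a b x y = fEnt n a b x y := by
  rw [entryA, if_neg hxy.ne, if_pos ⟨hxy, h⟩]

lemma entryA_comm (x y : ℤ) : entryA n a b x y = entryA n a b y x := by
  unfold entryA
  split_ifs <;> first | rfl | subst_vars; rfl | omega

lemma entryA_of_gt {x y : ℤ} (hxy : y < x) (h : 2 ∣ x - y) :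
    entryA n a b x y = fEnt n a b y x := by
  rw [entryA_comm, entryA_of_lt hxy (by omega)]

lemma entryA_of_not_dvd {x y : ℤ} (h : ¬ 2 ∣ x - y) : entryA n a b x y = 0 := by
  rw [entryA, if_neg (by omega), if_neg (by omega), if_neg (by omega)]

lemma entryB_of_le {x y : ℤ} (hx : 0 < x) (hxy : x ≤ y) (h : 2 ∣ x - y) :
    entryB n a b x y = hEnt n a b x y := if_pos ⟨hx, hxy, h⟩

lemma entryB_of_lt {x y : ℤ} (hxy : y < x) : entryB n a b x y = 0 := if_neg (by omega)

lemma entryB_of_nonpos {x y : ℤ} (hx : x ≤ 0) : entryB n a b x y = 0 := if_neg (by omega)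

lemma entryA_zero_left {y : ℤ} (hy : 0 ≤ y) : entryA n a b 0 y = if y = 0 then 1 else 0 := by
  unfold entryA fEnt
  split_ifs <;> first | omega | simp

lemma entryB_zero_right (x : ℤ) : entryB n a b x 0 = 0 := if_neg (by omega)

lemma entryB_of_not_dvd {x y : ℤ} (h : ¬ 2 ∣ x - y) : entryB n a b x y = 0 := if_neg (by omega)

lemma star_entryA (x y : ℤ) : star (entryA n a b x y) = entryA n a b x y := by
  unfold entryA fEnt
  split_ifs <;> simp

lemma star_entryB (x y : ℤ) : star (entryB n a b x y) = entryB n a b x y := by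
  unfold entryB hEnt
  split_ifs <;> simp

lemma entryB_reflect {x y : ℤ} (hx : 0 < x) (hy : y < n) :
    entryB n a b (n - y) (n - x) = -entryB n a b x y := by
  unfold entryB hEnt
  rw [show (n : ℤ) - y - (n - x) = x - y by ring]
  split_ifs <;> first | omega | push_cast; ring

end IntegerEntries

section Recurrences

variable {n : ℕ} {a b : ℝ}

lemma entryA_step_of_le (hab : a ^ 2 + b ^ 2 = 1) (ha : a ≠ 0) {J K : ℤ} (hJ : 0 ≤ J)
    (hJK : J ≤ K) :
    entryA n a b J K = (if J = K then 1 else 0) + (a : ℂ) ^ 2 * entryA n a b (J - 1) (K - 1)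
      + a * b * (entryB n a b (J + 1) (K - 1) + entryB n a b (K + 1) (J - 1))
      + (b : ℂ) ^ 2 * entryA n a b (n - 1 - J) (n - 1 - K) := by
  have haC : (a : ℂ) ≠ 0 := Complex.ofReal_ne_zero.mpr ha
  have habC : (a : ℂ) ^ 2 + (b : ℂ) ^ 2 = 1 := by exact_mod_cast congrArg Complex.ofReal hab
  rcases hJK.lt_or_eq with hJK | rfl
  swap
  · simp (disch := omega) only [entryA_self, entryB_of_lt]
    simp only [fEnt, sub_self, Int.zero_ediv, zpow_zero]
    push_cast
    field_simp
    linear_combination (-J * (b ^ 2 * (n - J - 1) + a ^ 2 : ℂ)) * habC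
  by_cases hpar : 2 ∣ J - K
  swap
  · simp (disch := omega) only [entryA_of_not_dvd, entryB_of_not_dvd, if_neg]
    ring
  obtain ⟨m, hm⟩ := hpar
  simp (disch := omega) only [entryA_of_lt, entryA_of_gt, entryB_of_le, entryB_of_lt, if_neg]
  have e₀ : (J - K) / 2 = m := by omega
  have e₁ : (J - 1 - (K - 1)) / 2 = m := by omega
  have e₂ : (J + 1 - (K - 1)) / 2 = m + 1 := by omega
  have e₃ : (n - 1 - K - (n - 1 - J)) / 2 = m := by omega
  simp only [fEnt, hEnt, e₀, e₁, e₂, e₃, zpow_add_one₀ (by norm_num : (-1 : ℂ) ≠ 0)]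
  push_cast
  field_simp
  linear_combination (-(-1 : ℂ) ^ m * b ^ 2 * J * (n - K - 1)) * habC

lemma entryB_step (hab : a ^ 2 + b ^ 2 = 1) (ha : a ≠ 0) {J K : ℤ} (hJ : 0 < J) (hK : 0 ≤ K) :
    entryB n a b J K =
      a * b * (entryA n a b (J - 1) (K - 1) - entryA n a b (n - 1 - J) (n - 1 - K))
        - (a : ℂ) ^ 2 * entryB n a b (J + 1) (K - 1)
        + (b : ℂ) ^ 2 * entryB n a b (K + 1) (J - 1) := by
  have haC : (a : ℂ) ≠ 0 := Complex.ofReal_ne_zero.mpr ha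
  have habC : (a : ℂ) ^ 2 + (b : ℂ) ^ 2 = 1 := by exact_mod_cast congrArg Complex.ofReal hab
  by_cases hpar : 2 ∣ J - K
  swap
  · simp (disch := omega) only [entryA_of_not_dvd, entryB_of_not_dvd]
    ring
  rcases lt_trichotomy J K with hJK | rfl | hJK
  · obtain ⟨m, hm⟩ := hpar
    simp (disch := omega) only [entryA_of_lt, entryA_of_gt, entryB_of_le, entryB_of_lt]
    have e₀ : (J - K) / 2 = m := by omega
    have e₁ : (J - 1 - (K - 1)) / 2 = m := by omega
    have e₂ : (J + 1 - (K - 1)) / 2 = m + 1 := by omega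
    have e₃ : (n - 1 - K - (n - 1 - J)) / 2 = m := by omega
    simp only [fEnt, hEnt, e₀, e₁, e₂, e₃, zpow_add_one₀ (by norm_num : (-1 : ℂ) ≠ 0)]
    push_cast
    field_simp
    linear_combination (-(-1 : ℂ) ^ m * b * (J + K - n)) * habC
  · simp (disch := omega) only [entryA_self, entryB_of_le, entryB_of_lt]
    simp only [fEnt, hEnt, sub_self, Int.zero_ediv, zpow_zero]
    push_cast
    field_simp
    linear_combination (-(b : ℂ) * (2 * J - n)) * habC
  · obtain ⟨m, hm⟩ : 2 ∣ K - J := by omega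
    simp (disch := omega) only [entryA_of_lt, entryA_of_gt, entryB_of_le, entryB_of_lt]
    have e₁ : (K - 1 - (J - 1)) / 2 = m := by omega
    have e₂ : (K + 1 - (J - 1)) / 2 = m + 1 := by omega
    have e₃ : (n - 1 - J - (n - 1 - K)) / 2 = m := by omega
    simp only [fEnt, hEnt, e₁, e₂, e₃, zpow_add_one₀ (by norm_num : (-1 : ℂ) ≠ 0)]
    push_cast
    field_simp
    ring

lemma entryA_step (hab : a ^ 2 + b ^ 2 = 1) (ha : a ≠ 0) {J K : ℤ} (hJ : 0 ≤ J)
    (hK : 0 ≤ K) :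
    entryA n a b J K = (if J = K then 1 else 0) + (a : ℂ) ^ 2 * entryA n a b (J - 1) (K - 1)
      + a * b * (entryB n a b (J + 1) (K - 1) + entryB n a b (K + 1) (J - 1))
      + (b : ℂ) ^ 2 * entryA n a b (n - 1 - J) (n - 1 - K) := by
  rcases le_total J K with hJK | hKJ
  · exact entryA_step_of_le hab ha hJ hJK
  · rw [entryA_comm, entryA_step_of_le hab ha hK hKJ, entryA_comm (K - 1), entryA_comm (n - 1 - K)]
    simp only [eq_comm (a := K)]
    ring

lemma entryA_reflect_step (hab : a ^ 2 + b ^ 2 = 1) (ha : a ≠ 0) {J K : ℤ}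
    (hJ : 0 ≤ J) (hK : 0 ≤ K) (hJn : J ≤ n) (hKn : K ≤ n) :
    entryA n a b (n - J) (n - K) =
      (if J = K then 1 else 0) + (b : ℂ) ^ 2 * entryA n a b (J - 1) (K - 1)
      - a * b * (entryB n a b (J + 1) (K - 1) + entryB n a b (K + 1) (J - 1))
      + (a : ℂ) ^ 2 * entryA n a b (n - 1 - J) (n - 1 - K) := by
  have h := entryA_step (n := n) hab ha (J := n - J) (K := n - K) (by omega) (by omega)
  have h₁ := entryB_reflect (n := n) (a := a) (b := b) (x := J + 1) (y := K - 1)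
    (by omega) (by omega)
  have h₂ := entryB_reflect (n := n) (a := a) (b := b) (x := K + 1) (y := J - 1)
    (by omega) (by omega)
  simp only [sub_right_inj] at h
  ring_nf at h h₁ h₂ ⊢
  linear_combination h + a * b * (h₁ + h₂)

end Recurrences

section Blocks

variable {n : ℕ} [NeZero n] {a b : ℝ}

lemma blockA_apply (j k : Fin n) : blockA n a b j k = entryA n a b j k := by
  simp [blockA, entryA, Fin.ext_iff]

lemma blockB_apply (j k : Fin n) : blockB n a b j k = entryB n a b j k := by
  simp [blockB, entryB]

lemma blockC_apply_of_ne_zero {j k : Fin n} (hj : j ≠ 0) (hk : k ≠ 0) :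
    blockC n a b j k = entryA n a b (n - j) (n - k) := by
  have := j.isLt; have := k.isLt
  simp [blockC, blockA_apply, Fin.val_neg, hj, hk]

lemma Fin.neg_add_one_eq_rev (j : Fin n) : -(j + 1) = j.rev := by
  obtain ⟨m, rfl⟩ := Nat.exists_eq_add_one_of_ne_zero (NeZero.ne n)
  rw [← Fin.last_sub, ← neg_neg (Fin.last m), Fin.neg_last]
  abel

lemma Fin.natCast_val_sub_one {j : Fin n} (hj : j ≠ 0) :
    (((j - 1 : Fin n) : ℕ) : ℤ) = (j : ℕ) - 1 := by
  have := Fin.pos_iff_ne_zero.mpr hj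
  rw [Fin.val_sub_one_of_ne_zero hj]
  omega

lemma star_blockB (j k : Fin n) : star (blockB n a b j k) = blockB n a b j k := by
  rw [blockB_apply, star_entryB]

lemma blockC_add_one (j k : Fin n) :
    blockC n a b (j + 1) (k + 1) = entryA n a b (n - 1 - j) (n - 1 - k) := by
  have := j.isLt; have := k.isLt
  simp only [blockC, of_apply, Fin.neg_add_one_eq_rev, blockA_apply, Fin.val_rev]
  congr 1 <;> omega

lemma blockB_add_one_left (j k : Fin n) : blockB n a b (j + 1) k = entryB n a b (j + 1) k := by
  have := k.isLt
  rcases Nat.lt_or_ge ((j : ℕ) + 1) n with hj | hj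
  · rw [blockB_apply, Fin.val_add_one_of_lt' hj, Nat.cast_succ]
  · have hrev : j.rev = 0 :=
      Fin.ext (by simp only [Fin.val_rev, Fin.coe_ofNat_eq_mod, Nat.zero_mod]; omega)
    rw [← neg_neg (j + 1), Fin.neg_add_one_eq_rev, hrev, neg_zero, blockB_apply,
      entryB_of_nonpos (by simp), entryB_of_lt (by omega)]

end Blocks

section Interior

variable {n : ℕ} [NeZero n] {a b : ℝ}

lemma blockA_step (hab : a ^ 2 + b ^ 2 = 1) (ha : a ≠ 0) {j k : Fin n} (hj : j ≠ 0)
    (hk : k ≠ 0) :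
    blockA n a b j k = (if j = k then 1 else 0) + (a : ℂ) ^ 2 * blockA n a b (j - 1) (k - 1)
      + a * b * (blockB n a b (j + 1) (k - 1) + blockB n a b (k + 1) (j - 1))
      + (b : ℂ) ^ 2 * blockC n a b (j + 1) (k + 1) := by
  rw [blockA_apply, blockA_apply, blockB_add_one_left, blockB_add_one_left, blockC_add_one,
    Fin.natCast_val_sub_one hj, Fin.natCast_val_sub_one hk,
    entryA_step hab ha (by positivity) (by positivity)]
  simp [Fin.ext_iff]

lemma blockB_step (hab : a ^ 2 + b ^ 2 = 1) (ha : a ≠ 0) {j k : Fin n} (hj : j ≠ 0)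
    (hk : k ≠ 0) :
    blockB n a b j k =
      a * b * (blockA n a b (j - 1) (k - 1) - blockC n a b (j + 1) (k + 1))
        - (a : ℂ) ^ 2 * blockB n a b (j + 1) (k - 1)
        + (b : ℂ) ^ 2 * blockB n a b (k + 1) (j - 1) := by
  rw [blockB_apply, blockA_apply, blockB_add_one_left, blockB_add_one_left, blockC_add_one,
    Fin.natCast_val_sub_one hj, Fin.natCast_val_sub_one hk,
    entryB_step hab ha (by simpa [Fin.pos_iff_ne_zero] using hj) (by positivity)]

lemma blockC_step (hab : a ^ 2 + b ^ 2 = 1) (ha : a ≠ 0) {j k : Fin n} (hj : j ≠ 0)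
    (hk : k ≠ 0) :
    blockC n a b j k = (if j = k then 1 else 0) + (b : ℂ) ^ 2 * blockA n a b (j - 1) (k - 1)
      - a * b * (blockB n a b (j + 1) (k - 1) + blockB n a b (k + 1) (j - 1))
      + (a : ℂ) ^ 2 * blockC n a b (j + 1) (k + 1) := by
  rw [blockC_apply_of_ne_zero hj hk, blockA_apply, blockB_add_one_left, blockB_add_one_left,
    blockC_add_one, Fin.natCast_val_sub_one hj, Fin.natCast_val_sub_one hk,
    entryA_reflect_step hab ha (by positivity) (by positivity) (by simp [j.isLt.le])
      (by simp [k.isLt.le])]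
  simp [Fin.ext_iff]

end Interior

section FullX

variable {n : ℕ} [NeZero n] {a b : ℝ}

lemma fullX_isHermitian : (fullX n a b).IsHermitian := by
  ext ⟨c, j⟩ ⟨d, k⟩
  fin_cases c <;> fin_cases d <;>
    simp [fullX, blockA_apply, blockB_apply, blockC, star_entryA, star_entryB, entryA_comm]

lemma fullX_apply_zero_right (p : Fin 2 × Fin n) (d : Fin 2) :
    fullX n a b p (d, 0) = if p = (d, 0) then 1 else 0 := by
  obtain ⟨c, j⟩ := p
  fin_cases c <;> fin_cases d <;>
    simp [fullX, blockA_apply, blockB_apply, blockC, entryA_comm _ 0, entryA_zero_left,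
      entryB_zero_right, entryB_of_nonpos, star_entryB]

end FullX

theorem quantum_walk_runtime_fixed_point_general
    (n : ℕ) [NeZero n] (a b : ℝ)
    (hab : a ^ 2 + b ^ 2 = 1) (ha : a ≠ 0) :
    fullX n a b = 1 + stepE n a b * fullX n a b * (stepE n a b)ᴴ := by
  -- Both sides are Hermitian, so it suffices to check column `0` and the interior entries
  -- with `d ≤ c`.
  refine fullX_isHermitian.ext_of_total
    (isHermitian_one.add (isHermitian_mul_mul_conjTranspose _ fullX_isHermitian))
    (fun p q => q.2 = 0 ∨ (p.2 ≠ 0 ∧ q.2 ≠ 0 ∧ q.1 ≤ p.1)) ?_ ?_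
  · rintro ⟨c, j⟩ ⟨d, k⟩
    by_cases hk : k = 0; · simp [hk]
    by_cases hj : j = 0; · simp [hj]
    rcases le_total c d with h | h <;> simp [*]
  rintro ⟨c, j⟩ ⟨d, k⟩ (rfl | ⟨hj, hk, hdc⟩)
  · simp [fullX_apply_zero_right, mul_conjTranspose_stepE_apply, one_apply]
  rw [Matrix.add_apply, mul_conjTranspose_stepE_apply, if_neg hk, stepE_mul_apply, stepE_mul_apply,
    if_neg hj, if_neg hj, one_apply]
  fin_cases c <;> fin_cases d <;>
    simp only [fullX, coinT, Fin.isValue, Fin.zero_eta, Fin.mk_one, of_apply, conjTranspose_apply,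
      star_blockB, Prod.ext_iff, one_ne_zero, ↓reduceIte, true_and, false_and, cons_val',
      cons_val_zero, cons_val_fin_one, cons_val_one, neg_mul, mul_neg, zero_add]
  · linear_combination blockA_step hab ha hj hk
  · simp at hdc
  · linear_combination blockB_step hab ha hj hk
  · linear_combination blockC_step hab ha hj hk

/-- Verification step of the expected runtime of the quantum walk on the `n`-circle:
the explicitly given matrix `X` satisfies the fixed-point equation `X = I + E X Eᴴ`. -/
theorem quantum_walk_runtime_fixed_point
    (n : ℕ) [NeZero n] (hn : 2 ≤ n) (a b : ℝ)
    (hab : a ^ 2 + b ^ 2 = 1) (ha : a ≠ 0) :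
    fullX n a b = 1 + stepE n a b * fullX n a b * (stepE n a b)ᴴ :=
  quantum_walk_runtime_fixed_point_general n a b hab ha
end
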